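/- Full column rank of the multi-anchor localization system: for N ≥ 2 anchors with direction cosine pairs (u_i, v_i), i = 1,…,N, form the 2N×(N+2) matrix A whose rows are [0, 1, 0,…, v_i, …, 0] and [1, 0, 0,…, u_i, …, 0] (the value v_i resp. u_i placed in column i+2). If for every i the pair (u_i, v_i) ≠ (0,0) and there exist i ≠ j with u_j v_i − u_i v_j ≠ 0, then A has full column rank N+2. -/
import Mathlib


open Matrix

/-- The `2N × (N+2)` matrix of the multi-anchor localization system `A t = b`
with unknown `t = (p_y, p_z, d₁, …, d_N)`: for each anchor `i` there are two rows
`[0, 1, 0, …, v_i, …, 0]` and `[1, 0, 0, …, u_i, …, 0]`, with `v_i` resp. `u_i`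
in the column associated with `d_i`. -/
def locMatrix {N : ℕ} (u v : Fin N → ℝ) :
    Matrix (Fin N × Fin 2) (Fin 2 ⊕ Fin N) ℝ :=
  Matrix.of fun r c =>
    Sum.elim (fun s : Fin 2 => if s = r.2 then 0 else 1)
      (fun k => if k = r.1 then (if r.2 = 0 then v r.1 else u r.1) else 0) c

/-- Full column rank of the multi-anchor localization system: if every direction
cosine pair is nonzero and at least two of them are linearly independent, then the
system matrix has full column rank `N + 2`. -/
theorem locMatrix_full_column_rank {N : ℕ} (hN : 2 ≤ N) (u v : Fin N → ℝ)
    (hnz : ∀ i, (u i, v i) ≠ (0, 0))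
    (hindep : ∃ i j, i ≠ j ∧ u j * v i - u i * v j ≠ 0) :
    (locMatrix u v).rank = N + 2 := by
  have hinj : Function.Injective (locMatrix u v).mulVecLin := by
    rw [← LinearMap.ker_eq_bot, LinearMap.ker_eq_bot']
    intro t ht
    have key0 : ∀ i, t (Sum.inl 1) + v i * t (Sum.inr i) = 0 := by
      intro i
      have := congrFun ht (i, 0)
      simpa [locMatrix, mulVecLin, mulVec, dotProduct, Fintype.sum_sum_type,
        Fin.sum_univ_two] using this
    have key1 : ∀ i, t (Sum.inl 0) + u i * t (Sum.inr i) = 0 := by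
      intro i
      have := congrFun ht (i, 1)
      simpa [locMatrix, mulVecLin, mulVec, dotProduct, Fintype.sum_sum_type,
        Fin.sum_univ_two] using this
    obtain ⟨i, j, hij, hD⟩ := hindep
    have hvi := key0 i; have hvj := key0 j
    have hui := key1 i; have huj := key1 j
    have hdi : t (Sum.inr i) = 0 := by
      have h1 : v i * t (Sum.inr i) = v j * t (Sum.inr j) := by linarith
      have h2 : u i * t (Sum.inr i) = u j * t (Sum.inr j) := by linarith
      have : (u j * v i - u i * v j) * t (Sum.inr i) = 0 := by linear_combination u j * h1 - v j * h2
      exact (mul_eq_zero.1 this).resolve_left hD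
    have h1 : t (Sum.inl 1) = 0 := by rw [hdi] at hvi; linarith
    have h0 : t (Sum.inl 0) = 0 := by rw [hdi] at hui; linarith
    funext c
    rcases c with s | k
    · fin_cases s <;> assumption
    · have hv := key0 k; have hu := key1 k
      rw [h0] at hu; rw [h1] at hv
      have hc := hnz k
      by_contra hk
      apply hc
      have : u k = 0 := by
        have := mul_eq_zero.1 (by linarith : u k * t (Sum.inr k) = 0)
        tauto
      have : v k = 0 := by
        have := mul_eq_zero.1 (by linarith : v k * t (Sum.inr k) = 0)
        tauto
      simp_all
  rw [Matrix.rank, LinearMap.finrank_range_of_inj hinj,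
    Module.finrank_fintype_fun_eq_card]
  simp [add_comm]
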